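/- arXiv:2409.00934 — 3 statements merged into one kernel-verified Lean document; each statement's English description precedes it below -/
import Mathlib

section
/- Let Y be a real random variable with a continuous Lebesgue density p_Y satisfying 0 < p_Y(y) ≤ D < ∞ for all y ∈ ℝ, and let (X_n)_{n≥1} be real random variables with Lebesgue densities (p_n)_{n≥1}. If ‖p_n − p_Y‖_2 → 0 as n → ∞ and there exists s > 1 such that sup_n E|ln p_Y(X_n)|^s < ∞, then KL(X_n‖Y) → 0 as n → ∞. -/
/-!
With `klFun x = x log x + 1 - x ≥ 0` and `g = p_Y · klFun (p_n / p_Y)`, the divergence is `∫ g`,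
because `p_n log (p_n / p_Y) = g + (p_n - p_Y)` and both densities integrate to `1`.
Where `p_Y ≥ δ`, `g ≤ (p_n - p_Y)² / p_Y ≤ (p_n - p_Y)² / δ` is controlled by the `L²` distance.
Where `p_Y < δ < 1`, `g ≤ 2 (p_n - p_Y)² + 3 p_Y + p_n |log p_Y|` and `|log p_Y| ≥ log δ⁻¹`,
so `p_n |log p_Y| ≤ p_n |log p_Y|^s / (log δ⁻¹)^(s-1)`, whose integral is
`E|log p_Y(X_n)|^s / (log δ⁻¹)^(s-1)`.
Hence `KL(X_n‖Y) ≤ (2/δ) ‖p_n - p_Y‖₂² + 3 P(p_Y(Y) < δ) + C / (log δ⁻¹)^(s-1)`: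
let `n → ∞`, then `δ → 0`.
-/

open MeasureTheory Real Filter
open scoped ENNReal

noncomputable section

def IsDensityOf {Ω : Type*} [MeasurableSpace Ω] (P : Measure Ω) (X : Ω → ℝ) (p : ℝ → ℝ) : Prop :=
  Measurable X ∧ Measurable p ∧ (∀ x, 0 ≤ p x) ∧
    Measure.map X P = volume.withDensity (fun x => ENNReal.ofReal (p x))

def KLdiv (pX pY : ℝ → ℝ) : ℝ := ∫ x, pX x * Real.log (pX x / pY x)

open Topology InformationTheory

lemma klFun_le_sq_sub_one {x : ℝ} (hx : 0 ≤ x) : klFun x ≤ (x - 1) ^ 2 := by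
  rcases hx.eq_or_lt with rfl | hx
  · simp [klFun_zero]
  · have := mul_le_mul_of_nonneg_left (log_le_sub_one_of_pos hx) hx.le
    rw [klFun_apply]
    nlinarith

lemma mul_klFun_div_le_sq_div {p q : ℝ} (hp : 0 ≤ p) (hq : 0 < q) :
    q * klFun (p / q) ≤ (p - q) ^ 2 / q := by
  calc q * klFun (p / q) ≤ q * (p / q - 1) ^ 2 :=
        mul_le_mul_of_nonneg_left (klFun_le_sq_sub_one (by positivity)) hq.le
    _ = (p - q) ^ 2 / q := by field_simp

lemma mul_klFun_div_le_of_le_one {p q : ℝ} (hp : 0 ≤ p) (hq : 0 < q) (hq1 : q ≤ 1) :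
    q * klFun (p / q) ≤ 2 * (p - q) ^ 2 + 3 * q + p * |log q| := by
  have hid : q * klFun (p / q) = p * log p - p * log q + q - p := by
    rcases hp.eq_or_lt with rfl | hp
    · simp [klFun_apply]
    · rw [klFun_apply, log_div hp.ne' hq.ne']
      field_simp
  have hplogp : p * log p ≤ p ^ 2 := by
    rcases hp.eq_or_lt with rfl | hp
    · simp
    · nlinarith [mul_le_mul_of_nonneg_left (log_le_sub_one_of_pos hp) hp.le]
  have hlogq : -(p * log q) ≤ p * |log q| := by
    nlinarith [neg_abs_le (log q)]
  nlinarith [sq_nonneg (p - 2 * q)]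

lemma mul_rpow_sub_one_le_rpow {L x s : ℝ} (hL : 0 < L) (hLx : L ≤ x) (hs : 1 ≤ s) :
    x * L ^ (s - 1) ≤ x ^ s := by
  calc x * L ^ (s - 1) ≤ x * x ^ (s - 1) := by gcongr; linarith
    _ = x ^ s := by
      rw [← rpow_one_add' (by linarith) (by linarith)]
      ring_nf

lemma mul_klFun_div_le {p q δ s : ℝ} (hp : 0 ≤ p) (hq : 0 < q) (hδ0 : 0 < δ) (hδ1 : δ < 1)
    (hs : 1 ≤ s) :
    q * klFun (p / q) ≤ 2 / δ * (p - q) ^ 2 + 3 * (if q < δ then q else 0)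
      + (log δ⁻¹ ^ (s - 1))⁻¹ * (p * |log q| ^ s) := by
  have hL : 0 < log δ⁻¹ := log_pos (one_lt_inv₀ hδ0 |>.mpr hδ1)
  have hsq : 2 * (p - q) ^ 2 ≤ 2 / δ * (p - q) ^ 2 :=
    mul_le_mul_of_nonneg_right (by rw [le_div_iff₀ hδ0]; linarith) (sq_nonneg _)
  have hlog_term : 0 ≤ (log δ⁻¹ ^ (s - 1))⁻¹ * (p * |log q| ^ s) := by positivity
  split_ifs with hqδ
  · have hLq : log δ⁻¹ ≤ |log q| := by
      rw [log_inv, abs_of_neg (log_neg hq (hqδ.trans hδ1))]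
      exact neg_le_neg (log_le_log hq hqδ.le)
    have : p * |log q| ≤ (log δ⁻¹ ^ (s - 1))⁻¹ * (p * |log q| ^ s) := by
      rw [inv_mul_eq_div, le_div_iff₀ (by positivity), mul_assoc]
      exact mul_le_mul_of_nonneg_left (mul_rpow_sub_one_le_rpow hL hLq hs) hp
    linarith [mul_klFun_div_le_of_le_one hp hq (hqδ.trans hδ1).le]
  · calc q * klFun (p / q) ≤ (p - q) ^ 2 / q := mul_klFun_div_le_sq_div hp hq
      _ ≤ (p - q) ^ 2 / δ := div_le_div_of_nonneg_left (sq_nonneg _) hδ0 (not_lt.mp hqδ)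
      _ ≤ 2 / δ * (p - q) ^ 2 := by
        rw [div_mul_eq_mul_div]; gcongr; linarith [sq_nonneg (p - q)]
      _ ≤ _ := by linarith

section

variable {α : Type*} [MeasurableSpace α] {μ : Measure α}

lemma eLpNorm_two_sq_eq_lintegral (f : α → ℝ) :
    eLpNorm f 2 μ ^ 2 = ∫⁻ x, ENNReal.ofReal (f x ^ 2) ∂μ := by
  have h := eLpNorm_nnreal_pow_eq_lintegral (f := f) (μ := μ) (p := 2) two_ne_zero
  simp only [ENNReal.coe_ofNat, NNReal.coe_ofNat, ENNReal.rpow_two] at h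
  simp only [h, ← ofReal_norm, Real.norm_eq_abs, ← ENNReal.ofReal_pow (abs_nonneg _), sq_abs]

lemma lintegral_mul_klFun_div_le {p q : α → ℝ} (hpm : Measurable p) (hqm : Measurable q)
    (hp : ∀ x, 0 ≤ p x) (hq : ∀ x, 0 < q x) {δ s : ℝ} (hδ0 : 0 < δ) (hδ1 : δ < 1)
    (hs : 1 ≤ s) :
    ∫⁻ x, ENNReal.ofReal (q x * klFun (p x / q x)) ∂μ ≤
      ENNReal.ofReal (2 / δ) * eLpNorm (fun x => p x - q x) 2 μ ^ 2
        + 3 * ∫⁻ x in {x | q x < δ}, ENNReal.ofReal (q x) ∂μ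
        + ENNReal.ofReal (log δ⁻¹ ^ (s - 1))⁻¹
          * ∫⁻ x, ENNReal.ofReal (p x * |log (q x)| ^ s) ∂μ := by
  have hA : MeasurableSet {x | q x < δ} := measurableSet_lt hqm measurable_const
  calc ∫⁻ x, ENNReal.ofReal (q x * klFun (p x / q x)) ∂μ
      ≤ ∫⁻ x, ENNReal.ofReal (2 / δ) * ENNReal.ofReal ((p x - q x) ^ 2)
          + 3 * {x | q x < δ}.indicator (fun x => ENNReal.ofReal (q x)) x
          + ENNReal.ofReal (log δ⁻¹ ^ (s - 1))⁻¹
            * ENNReal.ofReal (p x * |log (q x)| ^ s) ∂μ := by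
        have hc : 0 ≤ (log δ⁻¹ ^ (s - 1))⁻¹ :=
          inv_nonneg.2 (rpow_nonneg (log_nonneg (one_le_inv₀ hδ0 |>.mpr hδ1.le)) _)
        refine lintegral_mono fun x => ?_
        have hind : ENNReal.ofReal (3 * if q x < δ then q x else 0)
            = 3 * {x | q x < δ}.indicator (fun x => ENNReal.ofReal (q x)) x := by
          by_cases h : q x < δ <;> simp [h, ENNReal.ofReal_mul]
        have hlog : 0 ≤ p x * |log (q x)| ^ s := mul_nonneg (hp x) (by positivity)
        have hmid : 0 ≤ 3 * if q x < δ then q x else 0 := by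
          split_ifs <;> linarith [hq x]
        refine (ENNReal.ofReal_le_ofReal
          (mul_klFun_div_le (hp x) (hq x) hδ0 hδ1 hs)).trans_eq ?_
        rw [ENNReal.ofReal_add (by positivity) (mul_nonneg hc hlog),
          ENNReal.ofReal_add (by positivity) hmid, ENNReal.ofReal_mul (by positivity),
          ENNReal.ofReal_mul hc, hind]
    _ = _ := by
        rw [lintegral_add_left (by fun_prop), lintegral_add_left (by fun_prop),
          lintegral_const_mul _ (by fun_prop), lintegral_const_mul _ (by fun_prop),
          lintegral_const_mul _ (by fun_prop), lintegral_indicator hA,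
          eLpNorm_two_sq_eq_lintegral]

lemma tendsto_measure_setOf_lt_nhdsGT_zero [IsFiniteMeasure μ] {f : α → ℝ} (hf : Measurable f)
    (hpos : ∀ x, 0 < f x) :
    Tendsto (fun δ => μ {x | f x < δ}) (𝓝[>] 0) (𝓝 0) := by
  have hempty : ⋂ δ > (0 : ℝ), {x | f x < δ} = ∅ := by
    ext x
    simpa using ⟨f x, hpos x, le_rfl⟩
  simpa [hempty, Function.comp_def] using tendsto_measure_biInter_gt (μ := μ) (a := (0 : ℝ))
    (fun δ _ => (measurableSet_lt hf measurable_const).nullMeasurableSet)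
    (fun _ _ _ hij _ hx => lt_of_lt_of_le hx hij) ⟨1, one_pos, measure_ne_top _ _⟩

end

lemma KLdiv_eq_toReal_lintegral {p q : ℝ → ℝ} (hpi : Integrable p) (hqi : Integrable q)
    (hpq : ∫ x, p x = ∫ x, q x) (hp : ∀ x, 0 ≤ p x) (hq : ∀ x, 0 < q x) :
    KLdiv p q = (∫⁻ x, ENNReal.ofReal (q x * klFun (p x / q x))).toReal := by
  have hsplit : (fun x => p x * log (p x / q x))
      = fun x => q x * klFun (p x / q x) + (p x - q x) := by
    ext x
    have := (hq x).ne'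
    rw [klFun_apply]
    field_simp
    ring
  have hdiff : Integrable (fun x => p x - q x) := hpi.sub hqi
  have hmeas : AEStronglyMeasurable (fun x => q x * klFun (p x / q x)) :=
    (hqi.aemeasurable.mul (measurable_klFun.comp_aemeasurable
      (hpi.aemeasurable.div hqi.aemeasurable))).aestronglyMeasurable
  rw [KLdiv, hsplit, ← integral_eq_lintegral_of_nonneg_ae
    (Eventually.of_forall fun x => mul_nonneg (hq x).le (klFun_nonneg (div_nonneg (hp x)
      (hq x).le))) hmeas]
  by_cases hg : Integrable fun x => q x * klFun (p x / q x)
  · rw [integral_add hg hdiff, integral_sub hpi hqi, hpq, sub_self, add_zero]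
  · -- both Bochner integrals are junk `0`, as is `(∞).toReal`
    rw [integral_undef hg, integral_undef (by rwa [integrable_add_iff_integrable_left' hdiff])]

namespace IsDensityOf

variable {Ω : Type*} [MeasurableSpace Ω] {P : Measure Ω} {X : Ω → ℝ} {p : ℝ → ℝ}

lemma lintegral_comp (h : IsDensityOf P X p) {φ : ℝ → ℝ≥0∞} (hφ : Measurable φ) :
    ∫⁻ ω, φ (X ω) ∂P = ∫⁻ x, ENNReal.ofReal (p x) * φ x := by
  rw [← lintegral_map hφ h.1, h.2.2.2,
    lintegral_withDensity_eq_lintegral_mul _ h.2.1.ennreal_ofReal hφ]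
  rfl

lemma setLIntegral_eq (h : IsDensityOf P X p) {A : Set ℝ} (hA : MeasurableSet A) :
    ∫⁻ x in A, ENNReal.ofReal (p x) = P (X ⁻¹' A) := by
  rw [← withDensity_apply _ hA, ← h.2.2.2, Measure.map_apply h.1 hA]

lemma lintegral_ofReal_mul_eq (h : IsDensityOf P X p) {g : ℝ → ℝ} (hg : Measurable g)
    (hg0 : ∀ x, 0 ≤ g x) (hgi : Integrable (fun ω => g (X ω)) P) :
    ∫⁻ x, ENNReal.ofReal (p x * g x) = ENNReal.ofReal (∫ ω, g (X ω) ∂P) := by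
  simp_rw [ENNReal.ofReal_mul (h.2.2.1 _)]
  rw [← h.lintegral_comp hg.ennreal_ofReal,
    ofReal_integral_eq_lintegral_ofReal hgi (Eventually.of_forall fun ω => hg0 (X ω))]

lemma lintegral_eq_one [IsProbabilityMeasure P] (h : IsDensityOf P X p) :
    ∫⁻ x, ENNReal.ofReal (p x) = 1 := by
  simpa using h.setLIntegral_eq MeasurableSet.univ

lemma integrable [IsProbabilityMeasure P] (h : IsDensityOf P X p) : Integrable p := by
  refine ⟨h.2.1.aestronglyMeasurable, ?_⟩
  rw [hasFiniteIntegral_iff_ofReal (Eventually.of_forall h.2.2.1), h.lintegral_eq_one]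
  exact ENNReal.one_lt_top

lemma integral_eq_one [IsProbabilityMeasure P] (h : IsDensityOf P X p) : ∫ x, p x = 1 := by
  rw [integral_eq_lintegral_of_nonneg_ae (Eventually.of_forall h.2.2.1)
    h.2.1.aestronglyMeasurable, h.lintegral_eq_one, ENNReal.toReal_one]

end IsDensityOf

lemma tendsto_inv_log_inv_rpow_nhdsGT_zero {s : ℝ} (hs : 1 < s) :
    Tendsto (fun δ => (log δ⁻¹ ^ (s - 1))⁻¹) (𝓝[>] 0) (𝓝 0) := by
  have hlog : Tendsto (fun δ => log δ⁻¹) (𝓝[>] 0) atTop := by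
    simpa only [log_inv, Function.comp_def] using
      tendsto_neg_atBot_atTop.comp tendsto_log_nhdsGT_zero
  exact ((tendsto_rpow_atTop (by linarith)).comp hlog).inv_tendsto_atTop

lemma tendsto_zero_of_le_mul_add {ι κ : Type*} {l : Filter ι} {l' : Filter κ} [l'.NeBot]
    {a b : ι → ℝ≥0∞} {c t : κ → ℝ≥0∞} (hb : Tendsto b l (𝓝 0)) (hc : ∀ k, c k ≠ ∞)
    (ht : Tendsto t l' (𝓝 0)) (h : ∀ᶠ k in l', ∀ i, a i ≤ c k * b i + t k) :
    Tendsto a l (𝓝 0) := by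
  refine ENNReal.tendsto_nhds_zero.2 fun ε hε => ?_
  have hε2 : 0 < ε / 2 := ENNReal.half_pos hε.ne'
  obtain ⟨k, hk, htk⟩ := (h.and (ENNReal.tendsto_nhds_zero.1 ht _ hε2)).exists
  have hcb : Tendsto (fun i => c k * b i) l (𝓝 0) := by
    simpa using ENNReal.Tendsto.const_mul hb (Or.inr (hc k))
  filter_upwards [ENNReal.tendsto_nhds_zero.1 hcb _ hε2] with i hi
  calc a i ≤ c k * b i + t k := hk i
    _ ≤ ε / 2 + ε / 2 := add_le_add hi htk
    _ = ε := ENNReal.add_halves ε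

theorem kl_tendsto_zero_of_L2_tendsto_zero_general
    {Ω : Type*} [MeasurableSpace Ω] (P : Measure Ω) [IsProbabilityMeasure P]
    (Y : Ω → ℝ) (pY : ℝ → ℝ) (hY : IsDensityOf P Y pY)
    (hpos : ∀ y, 0 < pY y)
    (X : ℕ → Ω → ℝ) (p : ℕ → ℝ → ℝ) (hX : ∀ n, IsDensityOf P (X n) (p n))
    (hL2 : Tendsto (fun n => eLpNorm (fun x => p n x - pY x) 2 volume) atTop (nhds 0))
    (s : ℝ) (hs : 1 < s) (C : ℝ)
    (hint : ∀ n, Integrable (fun ω => |Real.log (pY (X n ω))| ^ s) P)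
    (hmom : ∀ n, ∫ ω, |Real.log (pY (X n ω))| ^ s ∂P ≤ C) :
    Tendsto (fun n => KLdiv (p n) pY) atTop (nhds 0) := by
  have hpY : Measurable pY := hY.2.1
  have hKL (n : ℕ) : KLdiv (p n) pY
      = (∫⁻ x, ENNReal.ofReal (pY x * klFun (p n x / pY x))).toReal :=
    KLdiv_eq_toReal_lintegral (hX n).integrable hY.integrable
      (by rw [(hX n).integral_eq_one, hY.integral_eq_one]) (hX n).2.2.1 hpos
  have hmoment (n : ℕ) : ∫⁻ x, ENNReal.ofReal (p n x * |log (pY x)| ^ s) ≤ ENNReal.ofReal C := by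
    rw [(hX n).lintegral_ofReal_mul_eq (by fun_prop) (fun _ => by positivity) (hint n)]
    exact ENNReal.ofReal_le_ofReal (hmom n)
  have hbound : ∀ᶠ δ in 𝓝[>] (0 : ℝ), ∀ n,
      ∫⁻ x, ENNReal.ofReal (pY x * klFun (p n x / pY x))
        ≤ ENNReal.ofReal (2 / δ) * eLpNorm (fun x => p n x - pY x) 2 volume ^ 2
          + (3 * P (Y ⁻¹' {y | pY y < δ})
            + ENNReal.ofReal (log δ⁻¹ ^ (s - 1))⁻¹ * ENNReal.ofReal C) := by
    filter_upwards [Ioo_mem_nhdsGT one_pos] with δ ⟨hδ0, hδ1⟩ n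
    rw [← add_assoc, ← hY.setLIntegral_eq (measurableSet_lt hpY measurable_const)]
    exact (lintegral_mul_klFun_div_le (hX n).2.1 hpY (hX n).2.2.1 hpos hδ0 hδ1 hs.le).trans
      (add_le_add le_rfl (mul_le_mul_right (hmoment n) _))
  have htail : Tendsto (fun δ : ℝ => 3 * P (Y ⁻¹' {y | pY y < δ})
      + ENNReal.ofReal (log δ⁻¹ ^ (s - 1))⁻¹ * ENNReal.ofReal C) (𝓝[>] 0) (𝓝 0) := by
    have h1 := ENNReal.Tendsto.const_mul (a := 3) (tendsto_measure_setOf_lt_nhdsGT_zero (μ := P)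
      (hpY.comp hY.1) fun ω => hpos (Y ω)) (Or.inr ENNReal.ofNat_ne_top)
    have h2 := ENNReal.Tendsto.mul_const (ENNReal.tendsto_ofReal
      (tendsto_inv_log_inv_rpow_nhdsGT_zero hs)) (Or.inr (ENNReal.ofReal_ne_top (r := C)))
    simpa using h1.add h2
  have hlim := tendsto_zero_of_le_mul_add (by simpa using ENNReal.Tendsto.pow (n := 2) hL2)
    (fun _ => ENNReal.ofReal_ne_top) htail hbound
  simp_rw [hKL]
  exact (ENNReal.tendsto_toReal ENNReal.zero_ne_top).comp hlim

/-- **Corollary 2.1.** If `Y` has a continuous, everywhere positive density `p_Y ≤ D`,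
`X_n` have densities `p_n` with `‖p_n − p_Y‖₂ → 0`, and for some `s > 1` the moments
`E|ln p_Y(X_n)|^s` are uniformly bounded, then `KL(X_n‖Y) → 0`. -/
theorem kl_tendsto_zero_of_L2_tendsto_zero
    {Ω : Type*} [MeasurableSpace Ω] (P : Measure Ω) [IsProbabilityMeasure P]
    (Y : Ω → ℝ) (pY : ℝ → ℝ) (hY : IsDensityOf P Y pY) (hcont : Continuous pY)
    (D : ℝ) (hpos : ∀ y, 0 < pY y) (hbd : ∀ y, pY y ≤ D)
    (X : ℕ → Ω → ℝ) (p : ℕ → ℝ → ℝ) (hX : ∀ n, IsDensityOf P (X n) (p n))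
    (hL2 : Tendsto (fun n => eLpNorm (fun x => p n x - pY x) 2 volume) atTop (nhds 0))
    (s : ℝ) (hs : 1 < s) (C : ℝ)
    (hint : ∀ n, Integrable (fun ω => |Real.log (pY (X n ω))| ^ s) P)
    (hmom : ∀ n, ∫ ω, |Real.log (pY (X n ω))| ^ s ∂P ≤ C) :
    Tendsto (fun n => KLdiv (p n) pY) atTop (nhds 0) :=
  kl_tendsto_zero_of_L2_tendsto_zero_general P Y pY hY hpos X p hX hL2 s hs C hint hmom
end
end

section
/- Let X be a real random variable with Lebesgue density p such that ‖p − φ‖_∞ < ∞, where φ is the standard Gaussian density. For A > 0 set 𝒞 := {x ∈ ℝ : |x| > A and p(x) > φ(x)}. Then ∫_𝒞 p(x) ln(p(x)/φ(x)) dx ≤ ln(√(2π)·(‖p − φ‖_∞ + 1))·P(|X| > A) + (1/2)·E[X²·1_{|X| > A}]. -/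
open MeasureTheory Real Filter
open scoped ENNReal

noncomputable section

/-- The standard Gaussian density on `ℝ`. -/
def gauss (x : ℝ) : ℝ := (Real.sqrt (2 * Real.pi))⁻¹ * Real.exp (-x ^ 2 / 2)

/-- The real-valued `L^q(ℝ)` norm. -/
def nrm (f : ℝ → ℝ) (q : ℝ≥0∞) : ℝ := (eLpNorm f q volume).toReal

/-- **Inequality (2.16).** For a random variable `X` with density `p` such that
`‖p − φ‖_∞ < ∞`, and `𝒞 := {x : |x| > A, p(x) > φ(x)}`,
`∫_𝒞 p ln(p/φ) ≤ ln(√(2π)(‖p − φ‖_∞ + 1)) P(|X| > A) + (1/2) E[X² 1_{|X| > A}]`. -/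
theorem integral_on_tail_le
    {Ω : Type*} [MeasurableSpace Ω] (P : Measure Ω) [IsProbabilityMeasure P]
    (X : Ω → ℝ) (p : ℝ → ℝ) (hX : IsDensityOf P X p)
    (hfin : eLpNorm (fun x => p x - gauss x) ⊤ volume < ⊤)
    (A : ℝ) (hA : 0 < A) :
    ∫ x in {x : ℝ | A < |x| ∧ gauss x < p x}, p x * Real.log (p x / gauss x) ≤
      Real.log (Real.sqrt (2 * Real.pi) * (nrm (fun x => p x - gauss x) ⊤ + 1))
          * (P {ω | A < |X ω|}).toReal
        + (1 / 2) * ∫ ω in {ω | A < |X ω|}, (X ω) ^ 2 ∂P := by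
  obtain ⟨hXm, hpm, hp0, hmap⟩ := hX
  have hgm : Measurable gauss := by unfold gauss; fun_prop
  have hFm : Measurable fun x => p x * Real.log (p x / gauss x) :=
    hpm.mul ((hpm.div hgm).log)
  set M := nrm (fun x => p x - gauss x) ⊤ with hMdef
  have hM0 : 0 ≤ M := ENNReal.toReal_nonneg
  have hsqrt1 : (1 : ℝ) ≤ Real.sqrt (2 * Real.pi) := by
    rw [show (1:ℝ) = Real.sqrt 1 by simp]
    exact Real.sqrt_le_sqrt (by nlinarith [Real.pi_gt_three])
  have hsqrt0 : (0 : ℝ) < Real.sqrt (2 * Real.pi) := lt_of_lt_of_le one_pos hsqrt1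
  set C := Real.log (Real.sqrt (2 * Real.pi) * (M + 1)) with hCdef
  have hC0 : 0 ≤ C := Real.log_nonneg (by nlinarith)
  have hgpos : ∀ x, 0 < gauss x := fun x =>
    mul_pos (inv_pos.mpr hsqrt0) (Real.exp_pos _)
  have hgle : ∀ x : ℝ, gauss x ≤ (Real.sqrt (2 * Real.pi))⁻¹ := by
    intro x
    have : Real.exp (-x ^ 2 / 2) ≤ 1 := Real.exp_le_one_iff.mpr (by nlinarith [sq_nonneg x])
    calc gauss x ≤ (Real.sqrt (2 * Real.pi))⁻¹ * 1 :=
          mul_le_mul_of_nonneg_left this (by positivity)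
      _ = _ := mul_one _
  -- a.e. bound p ≤ gauss + M
  have hae : ∀ᵐ x ∂(volume : Measure ℝ), p x ≤ gauss x + M := by
    filter_upwards [ae_le_eLpNormEssSup (f := fun x => p x - gauss x) (μ := volume)] with x hx
    rw [← eLpNorm_exponent_top] at hx
    have hne : eLpNorm (fun x => p x - gauss x) ⊤ volume ≠ ⊤ := hfin.ne
    have h2 := ENNReal.toReal_mono hne hx
    have : p x - gauss x ≤ M := le_trans (le_abs_self _) h2
    linarith
  -- sets
  set S : Set ℝ := {x | A < |x|} with hSdef
  have hSm : MeasurableSet S := measurableSet_lt measurable_const measurable_abs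
  set 𝒞 : Set ℝ := {x : ℝ | A < |x| ∧ gauss x < p x} with h𝒞def
  have h𝒞m : MeasurableSet 𝒞 := by
    have : 𝒞 = S ∩ {x | gauss x < p x} := rfl
    rw [this]; exact hSm.inter (measurableSet_lt hgm hpm)
  have h𝒞S : 𝒞 ⊆ S := fun x hx => hx.1
  -- identity for the integrand when gauss x < p x
  have hfid : ∀ x : ℝ, gauss x < p x →
      p x * Real.log (p x / gauss x)
        = p x * (Real.log (Real.sqrt (2 * Real.pi) * p x) + x ^ 2 / 2) := by
    intro x hx
    have hpx : 0 < p x := lt_trans (hgpos x) hx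
    have : Real.log (p x / gauss x)
        = Real.log (Real.sqrt (2 * Real.pi) * p x) + x ^ 2 / 2 := by
      rw [Real.log_div hpx.ne' (hgpos x).ne']
      unfold gauss
      rw [Real.log_mul (by positivity) (Real.exp_ne_zero _), Real.log_inv, Real.log_exp,
        Real.log_mul hsqrt0.ne' hpx.ne']
      ring
    rw [this]
  -- measure of the tail via the density
  have hP : P {ω | A < |X ω|} = ∫⁻ x in S, ENNReal.ofReal (p x) := by
    have h1 : {ω | A < |X ω|} = X ⁻¹' S := rfl
    rw [h1, ← Measure.map_apply hXm hSm, hmap, withDensity_apply _ hSm]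
  -- second moment via the density
  set T : ℝ≥0∞ := ∫⁻ x in S, ENNReal.ofReal (p x) * ENNReal.ofReal (x ^ 2) with hTdef
  have hrmap : Measure.map X (P.restrict {ω | A < |X ω|})
      = (volume.restrict S).withDensity fun x => ENNReal.ofReal (p x) := by
    have h1 : {ω | A < |X ω|} = X ⁻¹' S := rfl
    rw [h1, ← Measure.restrict_map hXm hSm, hmap, restrict_withDensity hSm]
  have hT2 : ∫⁻ ω in {ω | A < |X ω|}, ENNReal.ofReal ((X ω) ^ 2) ∂P = T := by
    have hmx2 : Measurable fun x : ℝ => ENNReal.ofReal (x ^ 2) := by fun_prop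
    rw [← lintegral_map hmx2 hXm, hrmap,
      lintegral_withDensity_eq_lintegral_mul _ (by fun_prop) hmx2]
    rfl
  -- the sum decomposition of the majorant
  have hgsum : ∫⁻ x in S, ENNReal.ofReal (p x * (C + x ^ 2 / 2))
      = ENNReal.ofReal C * (P {ω | A < |X ω|}) + ENNReal.ofReal (1/2) * T := by
    have hpt : ∀ x : ℝ, ENNReal.ofReal (p x * (C + x ^ 2 / 2))
        = ENNReal.ofReal C * ENNReal.ofReal (p x)
          + ENNReal.ofReal (1/2) * (ENNReal.ofReal (p x) * ENNReal.ofReal (x ^ 2)) := by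
      intro x
      have h1 : p x * (C + x ^ 2 / 2) = C * p x + (1/2) * (p x * x ^ 2) := by ring
      rw [h1, ENNReal.ofReal_add (mul_nonneg hC0 (hp0 x)) (mul_nonneg (by norm_num) (mul_nonneg (hp0 x) (sq_nonneg x))),
        ENNReal.ofReal_mul hC0, ENNReal.ofReal_mul (by norm_num : (0:ℝ) ≤ 1/2),
        ENNReal.ofReal_mul (hp0 x)]
    simp only [hpt]
    rw [lintegral_add_left (by fun_prop) _, lintegral_const_mul _ (by fun_prop),
      lintegral_const_mul _ (by fun_prop), hP]
  -- key pointwise bound on 𝒞 (under the a.e. hypothesis)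
  have hkey : ∀ x : ℝ, p x ≤ gauss x + M → x ∈ 𝒞 →
      p x * Real.log (p x / gauss x) ≤ p x * (C + x ^ 2 / 2) := by
    intro x hxM hx𝒞
    have hgx := hx𝒞.2
    have hpx : 0 < p x := lt_trans (hgpos x) hgx
    rw [hfid x hgx]
    have hlog : Real.log (Real.sqrt (2 * Real.pi) * p x) ≤ C := by
      apply Real.log_le_log (by positivity)
      have h1 : p x ≤ (Real.sqrt (2 * Real.pi))⁻¹ + M := le_trans hxM (by linarith [hgle x])
      calc Real.sqrt (2 * Real.pi) * p x
          ≤ Real.sqrt (2 * Real.pi) * ((Real.sqrt (2 * Real.pi))⁻¹ + M) :=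
            mul_le_mul_of_nonneg_left h1 hsqrt0.le
        _ = 1 + Real.sqrt (2 * Real.pi) * M := by
            field_simp
        _ ≤ Real.sqrt (2 * Real.pi) * (M + 1) := by nlinarith
    exact mul_le_mul_of_nonneg_left (by linarith) hpx.le
  by_cases hT : T = ⊤
  · -- the second moment is infinite: LHS integral is undefined (hence 0), RHS is nonneg
    have hnint : ¬ Integrable (fun x => p x * Real.log (p x / gauss x)) (volume.restrict 𝒞) := by
      intro hint
      have hflt : ∫⁻ x in 𝒞, ENNReal.ofReal (p x * Real.log (p x / gauss x)) < ⊤ :=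
        lt_of_le_of_lt (lintegral_mono fun x => Real.ofReal_le_enorm _) hint.2
      have hI : Integrable (fun x : ℝ => x ^ 2 * Real.exp (-(1/4) * x ^ 2)) := by
        have h2 : ∀ x : ℝ, x ^ (2:ℝ) = x ^ (2:ℕ) := fun x => by
          rw [show (2:ℝ) = ((2:ℕ):ℝ) by norm_num, Real.rpow_natCast]
        have := integrable_rpow_mul_exp_neg_mul_sq (by norm_num : (0:ℝ) < 1/4)
          (by norm_num : (-1:ℝ) < 2)
        simpa [h2] using this
      have hbd : ∀ x ∈ S, ENNReal.ofReal (p x) * ENNReal.ofReal (x ^ 2)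
          ≤ ENNReal.ofReal (x ^ 2 * Real.exp (-(1/4) * x ^ 2))
            + 𝒞.indicator (fun y => 4 * ENNReal.ofReal (p y * Real.log (p y / gauss y))) x := by
        intro x hxS
        rw [← ENNReal.ofReal_mul (hp0 x)]
        by_cases hx𝒞 : x ∈ 𝒞
        · rw [Set.indicator_of_mem hx𝒞]
          have hgx := hx𝒞.2
          have hpx : 0 < p x := lt_trans (hgpos x) hgx
          by_cases he : Real.exp (-(1/4) * x ^ 2) ≤ Real.sqrt (2 * Real.pi) * p x
          · refine le_add_left ?_
            have hlg : -(1/4) * x ^ 2 ≤ Real.log (Real.sqrt (2 * Real.pi) * p x) := by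
              calc -(1/4) * x ^ 2 = Real.log (Real.exp (-(1/4) * x ^ 2)) :=
                    (Real.log_exp _).symm
                _ ≤ _ := Real.log_le_log (Real.exp_pos _) he
            have hfx : p x * x ^ 2 ≤ 4 * (p x * Real.log (p x / gauss x)) := by
              rw [hfid x hgx]
              nlinarith [mul_nonneg hpx.le
                (show (0:ℝ) ≤ Real.log (Real.sqrt (2 * Real.pi) * p x) + (1/4) * x ^ 2
                  by linarith)]
            calc ENNReal.ofReal (p x * x ^ 2)
                ≤ ENNReal.ofReal (4 * (p x * Real.log (p x / gauss x))) :=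
                  ENNReal.ofReal_le_ofReal hfx
              _ = 4 * ENNReal.ofReal (p x * Real.log (p x / gauss x)) := by
                  rw [ENNReal.ofReal_mul (by norm_num : (0:ℝ) ≤ 4)]; norm_num
          · push_neg at he
            refine le_add_right (ENNReal.ofReal_le_ofReal ?_)
            have hple : p x ≤ Real.exp (-(1/4) * x ^ 2) := by nlinarith
            calc p x * x ^ 2 ≤ Real.exp (-(1/4) * x ^ 2) * x ^ 2 :=
                  mul_le_mul_of_nonneg_right hple (sq_nonneg x)
              _ = x ^ 2 * Real.exp (-(1/4) * x ^ 2) := mul_comm _ _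
        · rw [Set.indicator_of_notMem hx𝒞, add_zero]
          apply ENNReal.ofReal_le_ofReal
          have hple : p x ≤ gauss x := by
            by_contra hcon
            push_neg at hcon
            exact hx𝒞 ⟨hxS, hcon⟩
          have h1 : gauss x ≤ Real.exp (-(1/4) * x ^ 2) := by
            unfold gauss
            calc (Real.sqrt (2 * Real.pi))⁻¹ * Real.exp (-x ^ 2 / 2)
                ≤ 1 * Real.exp (-x ^ 2 / 2) := by
                  apply mul_le_mul_of_nonneg_right _ (Real.exp_pos _).le
                  rw [inv_le_one_iff₀]
                  right; exact hsqrt1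
              _ = Real.exp (-x ^ 2 / 2) := one_mul _
              _ ≤ Real.exp (-(1/4) * x ^ 2) :=
                  Real.exp_le_exp.mpr (by nlinarith [sq_nonneg x])
          calc p x * x ^ 2 ≤ Real.exp (-(1/4) * x ^ 2) * x ^ 2 :=
                mul_le_mul_of_nonneg_right (hple.trans h1) (sq_nonneg x)
            _ = x ^ 2 * Real.exp (-(1/4) * x ^ 2) := mul_comm _ _
      have hTlt : T < ⊤ := by
        have hmono : T ≤ (∫⁻ x in S, ENNReal.ofReal (x ^ 2 * Real.exp (-(1/4) * x ^ 2)))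
            + ∫⁻ x in S,
                𝒞.indicator (fun y => 4 * ENNReal.ofReal (p y * Real.log (p y / gauss y))) x := by
          rw [← lintegral_add_left (by fun_prop) _]
          exact setLIntegral_mono
            ((by fun_prop : Measurable fun x : ℝ =>
                ENNReal.ofReal (x ^ 2 * Real.exp (-(1/4) * x ^ 2))).add
              ((hFm.ennreal_ofReal.const_mul 4).indicator h𝒞m)) hbd
        refine lt_of_le_of_lt hmono (ENNReal.add_lt_top.mpr ⟨?_, ?_⟩)
        · refine lt_of_le_of_lt (lintegral_mono' Measure.restrict_le_self le_rfl) ?_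
          exact lt_of_le_of_lt (lintegral_mono fun x => Real.ofReal_le_enorm _) hI.2
        · rw [lintegral_indicator h𝒞m, Measure.restrict_restrict h𝒞m,
            Set.inter_eq_self_of_subset_left h𝒞S, lintegral_const_mul _ hFm.ennreal_ofReal]
          exact ENNReal.mul_lt_top (by norm_num) hflt
      exact hTlt.ne hT
    rw [integral_undef hnint]
    exact add_nonneg (mul_nonneg hC0 ENNReal.toReal_nonneg)
      (mul_nonneg (by norm_num) (integral_nonneg fun ω => sq_nonneg _))
  · -- the second moment is finite
    have hPne : P {ω | A < |X ω|} ≠ ⊤ := measure_ne_top _ _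
    have hSfin : ∫⁻ x in S, ENNReal.ofReal (p x * (C + x ^ 2 / 2)) ≠ ⊤ := by
      rw [hgsum]
      exact ENNReal.add_ne_top.mpr ⟨ENNReal.mul_ne_top ENNReal.ofReal_ne_top hPne,
        ENNReal.mul_ne_top ENNReal.ofReal_ne_top hT⟩
    have hstep : ∫⁻ x in 𝒞, ENNReal.ofReal (p x * Real.log (p x / gauss x))
        ≤ ∫⁻ x in S, ENNReal.ofReal (p x * (C + x ^ 2 / 2)) := by
      refine le_trans (lintegral_mono_ae ?_)
        (lintegral_mono' (Measure.restrict_mono h𝒞S le_rfl) le_rfl)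
      filter_upwards [ae_restrict_mem h𝒞m, ae_restrict_of_ae hae] with x h1 h2
      exact ENNReal.ofReal_le_ofReal (hkey x h2 h1)
    have hLHS : ∫ x in 𝒞, p x * Real.log (p x / gauss x)
        ≤ (∫⁻ x in 𝒞, ENNReal.ofReal (p x * Real.log (p x / gauss x))).toReal := by
      by_cases hint : Integrable (fun x => p x * Real.log (p x / gauss x)) (volume.restrict 𝒞)
      · rw [integral_eq_lintegral_of_nonneg_ae ?_ hint.1]
        filter_upwards [ae_restrict_mem h𝒞m] with x hx
        have hgx := hx.2
        have hpx : 0 < p x := lt_trans (hgpos x) hgx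
        have hlog0 : (0:ℝ) ≤ Real.log (p x / gauss x) :=
          Real.log_nonneg ((one_le_div (hgpos x)).mpr hgx.le)
        exact mul_nonneg hpx.le hlog0
      · rw [integral_undef hint]
        exact ENNReal.toReal_nonneg
    have hXint : Integrable (fun ω => (X ω) ^ 2) (P.restrict {ω | A < |X ω|}) := by
      refine ⟨(hXm.pow_const 2).aestronglyMeasurable, ?_⟩
      rw [hasFiniteIntegral_iff_ofReal (Eventually.of_forall fun ω => sq_nonneg _), hT2]
      exact lt_top_iff_ne_top.mpr hT
    have hEX : ∫ ω in {ω | A < |X ω|}, (X ω) ^ 2 ∂P = T.toReal := by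
      rw [integral_eq_lintegral_of_nonneg_ae (Eventually.of_forall fun ω => sq_nonneg _)
        hXint.1, hT2]
    calc ∫ x in 𝒞, p x * Real.log (p x / gauss x)
        ≤ (∫⁻ x in 𝒞, ENNReal.ofReal (p x * Real.log (p x / gauss x))).toReal := hLHS
      _ ≤ (∫⁻ x in S, ENNReal.ofReal (p x * (C + x ^ 2 / 2))).toReal :=
          ENNReal.toReal_mono hSfin hstep
      _ = C * (P {ω | A < |X ω|}).toReal + (1/2) * T.toReal := by
          rw [hgsum, ENNReal.toReal_add (ENNReal.mul_ne_top ENNReal.ofReal_ne_top hPne)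
            (ENNReal.mul_ne_top ENNReal.ofReal_ne_top hT), ENNReal.toReal_mul,
            ENNReal.toReal_mul, ENNReal.toReal_ofReal hC0,
            ENNReal.toReal_ofReal (by norm_num : (0:ℝ) ≤ 1/2)]
      _ = _ := by rw [hEX]
end
end

section
/- For every s > 2 there exist constants C₁, C₂ > 0 (depending only on s) with the following property: for every real random variable X with Lebesgue density p, E X = 0, Var(X) = 1, E|X|^s < ∞ and ‖p − φ‖_2 ≤ 1, D(X) ≤ (C₁ + ‖p − φ‖_∞)·(‖p − φ‖_1 + ‖p − φ‖_2) + C₂·(E|X|^s)^{2/s}·(‖p − φ‖_1 + ‖p − φ‖_2)^{1−2/s}. -/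
open MeasureTheory Real Filter
open scoped ENNReal

noncomputable section

/-!
With `εᵢ = ‖p − φ‖ᵢ`, split the line at the level `T` where `φ(T)` is comparable to `ε₂`.
Where `|x| ≤ T`, `ln y ≤ y − 1` gives `p ln (p/φ) ≤ (p − φ) + (p − φ)²/φ`, whose integral is at
most `ε₁ + ε₂² / φ(T) ≲ ε₁ + ε₂`. Where `|x| > T`, `p ln (p/φ) ≤ p² + p (x²/2 + 1)`: the Gaussian
tail bound makes `∫ p²` and the mass of `p` there `≲ ε₁ + ε₂`, and the second moment over a set
of mass `a` is at most `2 (E|X|^s)^{2/s} a^{1−2/s}` by truncating `x²` at the optimal height.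
-/

open ProbabilityTheory

lemma gauss_eq_gaussianPDFReal : gauss = gaussianPDFReal 0 1 := by
  ext x; simp [gauss, gaussianPDFReal]

lemma gauss_pos (x : ℝ) : 0 < gauss x := by
  unfold gauss; positivity

lemma integrable_gauss : Integrable gauss :=
  gauss_eq_gaussianPDFReal ▸ integrable_gaussianPDFReal 0 1

lemma one_le_sqrt_two_pi : 1 ≤ √(2 * π) :=
  Real.one_le_sqrt.2 (by linarith [Real.pi_gt_three])

lemma sqrt_two_pi_le_three : √(2 * π) ≤ 3 :=
  Real.sqrt_le_iff.2 ⟨by norm_num, by linarith [Real.pi_lt_d2]⟩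

lemma gauss_le_one (x : ℝ) : gauss x ≤ 1 := by
  unfold gauss
  calc (√(2 * π))⁻¹ * exp (-x ^ 2 / 2) ≤ 1 * 1 := by
        gcongr
        · exact inv_le_one_of_one_le₀ one_le_sqrt_two_pi
        · exact exp_le_one_iff.2 (by nlinarith [sq_nonneg x])
    _ = 1 := one_mul 1

lemma inv_gauss (x : ℝ) : (gauss x)⁻¹ = √(2 * π) * exp (x ^ 2 / 2) := by
  rw [gauss, mul_inv, inv_inv, ← exp_neg, neg_div, neg_neg]

lemma neg_log_gauss_le (x : ℝ) : -log (gauss x) ≤ x ^ 2 / 2 + 2 := by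
  rw [← log_inv, inv_gauss, log_mul (by positivity) (exp_pos _).ne', log_exp]
  linarith [log_le_sub_one_of_pos (by positivity : 0 < √(2 * π)), sqrt_two_pi_le_three]

lemma setIntegral_gauss_lt_abs_le {T : ℝ} (hT : 0 ≤ T) :
    ∫ x in {x | T < |x|}, gauss x ≤ 2 * exp (-T ^ 2 / 2) := by
  set μ := gaussianReal 0 1
  have hexp_int (t : ℝ) : Integrable (fun x => exp (t * id x)) μ :=
    integrable_exp_mul_gaussianReal t
  have hsub : {x : ℝ | T < |x|} ⊆ {x | T ≤ id x} ∪ {x | id x ≤ -T} := fun x (hx : T < |x|) =>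
    (lt_abs.1 hx).imp (fun h => show T ≤ x from h.le) fun h => show x ≤ -T by linarith
  have hupper := measure_ge_le_exp_mul_mgf T hT (hexp_int T)
  have hlower := measure_le_le_exp_mul_mgf (-T) (neg_nonpos.2 hT) (hexp_int (-T))
  rw [mgf_id_gaussianReal] at hupper hlower
  have hreal : ∫ x in {x | T < |x|}, gauss x = μ.real {x | T < |x|} := by
    rw [measureReal_def, gaussianReal_apply_eq_integral 0 one_ne_zero, ENNReal.toReal_ofReal,
      gauss_eq_gaussianPDFReal]
    exact setIntegral_nonneg_of_ae_restrict (ae_of_all _ (gaussianPDFReal_nonneg 0 1))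
  calc ∫ x in {x | T < |x|}, gauss x
      ≤ μ.real {x | T ≤ id x} + μ.real {x | id x ≤ -T} :=
        hreal ▸ (measureReal_mono hsub).trans (measureReal_union_le _ _)
    _ ≤ 2 * exp (-T ^ 2 / 2) := by
        refine (add_le_add hupper hlower).trans_eq ?_
        rw [← exp_add, ← exp_add]
        push_cast
        ring_nf

lemma mul_log_div_le_sub_add_sq_div {a b : ℝ} (ha : 0 ≤ a) (hb : 0 < b) :
    a * log (a / b) ≤ (a - b) + (a - b) ^ 2 / b := by
  rcases ha.eq_or_lt with rfl | ha
  · rw [zero_sub, neg_sq, sq, mul_div_cancel_right₀ _ hb.ne']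
    simp
  calc a * log (a / b) ≤ a * (a / b - 1) :=
        mul_le_mul_of_nonneg_left (log_le_sub_one_of_pos (by positivity)) ha.le
    _ = (a - b) + (a - b) ^ 2 / b := by field_simp; ring

lemma mul_log_div_le_mul_sub_log {a b : ℝ} (ha : 0 ≤ a) (hb : 0 < b) :
    a * log (a / b) ≤ a * (a - 1 - log b) := by
  rcases ha.eq_or_lt with rfl | ha
  · simp
  rw [log_div ha.ne' hb.ne']
  nlinarith [log_le_sub_one_of_pos ha]

lemma sq_le_sq_add_rpow_mul {s T : ℝ} (hs : 2 ≤ s) (hT : 0 < T) (x : ℝ) :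
    x ^ 2 ≤ T ^ 2 + T ^ (2 - s) * |x| ^ s := by
  rcases le_or_gt |x| T with hx | hx
  · have := sq_le_sq' (abs_le.1 hx).1 (abs_le.1 hx).2
    nlinarith [rpow_nonneg hT.le (2 - s), rpow_nonneg (abs_nonneg x) s]
  · have hx0 : 0 < |x| := hT.trans hx
    calc x ^ 2 = |x| ^ (2 - s) * |x| ^ s := by
          rw [← rpow_add hx0, sub_add_cancel, rpow_two, sq_abs]
      _ ≤ T ^ (2 - s) * |x| ^ s :=
          mul_le_mul_of_nonneg_right (rpow_le_rpow_of_nonpos hT hx.le (by linarith))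
            (rpow_nonneg hx0.le s)
      _ ≤ T ^ 2 + T ^ (2 - s) * |x| ^ s := le_add_of_nonneg_left (sq_nonneg T)

lemma integral_sq_mul_le {μ : Measure ℝ} {p : ℝ → ℝ} {s : ℝ} (hs : 2 ≤ s) (hp : ∀ x, 0 ≤ p x)
    (hpi : Integrable p μ) (hps : Integrable (fun x => |x| ^ s * p x) μ) {T : ℝ} (hT : 0 < T) :
    ∫ x, x ^ 2 * p x ∂μ ≤ T ^ 2 * ∫ x, p x ∂μ + T ^ (2 - s) * ∫ x, |x| ^ s * p x ∂μ := by
  rw [← integral_const_mul, ← integral_const_mul, ← integral_add (hpi.const_mul _)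
    (hps.const_mul _)]
  refine integral_mono_of_nonneg (ae_of_all _ fun x => mul_nonneg (sq_nonneg x) (hp x))
    ((hpi.const_mul _).add (hps.const_mul _)) (ae_of_all _ fun x => ?_)
  have := mul_le_mul_of_nonneg_right (sq_le_sq_add_rpow_mul hs hT x) (hp x)
  show x ^ 2 * p x ≤ T ^ 2 * p x + T ^ (2 - s) * (|x| ^ s * p x)
  linarith

/-- `T = (b / a) ^ (1 / s)` balances `T ^ 2 * a` against `T ^ (2 - s) * b`. -/
lemma rpow_inv_sq_mul_add {a b s : ℝ} (ha : 0 < a) (hb : 0 < b) (hs : s ≠ 0) :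
    ((b / a) ^ s⁻¹) ^ 2 * a + ((b / a) ^ s⁻¹) ^ (2 - s) * b =
      2 * (b ^ (2 / s) * a ^ (1 - 2 / s)) := by
  have hba : 0 < b / a := div_pos hb ha
  have h1 : ((b / a) ^ s⁻¹) ^ 2 * a = b ^ (2 / s) * a ^ (1 - 2 / s) := by
    rw [← rpow_natCast, ← rpow_mul hba.le, div_rpow hb.le ha.le, rpow_sub ha, rpow_one]
    push_cast; field_simp
  have h2 : ((b / a) ^ s⁻¹) ^ (2 - s) * b = ((b / a) ^ s⁻¹) ^ 2 * a := by
    rw [← rpow_mul hba.le, ← rpow_natCast, ← rpow_mul hba.le, mul_sub, rpow_sub hba,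
      inv_mul_cancel₀ hs, rpow_one]
    push_cast; field_simp
  rw [h2, h1]; ring

lemma integral_sq_mul_le_of_le {μ : Measure ℝ} {p : ℝ → ℝ} {s a b : ℝ} (hs : 2 < s)
    (hp : ∀ x, 0 ≤ p x) (hpi : Integrable p μ) (hps : Integrable (fun x => |x| ^ s * p x) μ)
    (ha : 0 < a) (hb : 0 < b) (hpa : ∫ x, p x ∂μ ≤ a) (hpb : ∫ x, |x| ^ s * p x ∂μ ≤ b) :
    ∫ x, x ^ 2 * p x ∂μ ≤ 2 * (b ^ (2 / s) * a ^ (1 - 2 / s)) := by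
  set T := (b / a) ^ s⁻¹
  have hT : 0 < T := rpow_pos_of_pos (div_pos hb ha) _
  rw [← rpow_inv_sq_mul_add ha hb (by positivity)]
  refine (integral_sq_mul_le hs.le hp hpi hps hT).trans ?_
  gcongr

lemma nrm_one_eq_integral_abs {u : ℝ → ℝ} (hu : AEStronglyMeasurable u) :
    nrm u 1 = ∫ x, |u x| := by
  rw [nrm, eLpNorm_one_eq_lintegral_enorm, ← integral_norm_eq_lintegral_enorm hu]
  rfl

lemma nrm_two_sq_eq_integral_sq {u : ℝ → ℝ} (hu : MemLp u 2) :
    nrm u 2 ^ 2 = ∫ x, u x ^ 2 := by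
  rw [nrm, hu.eLpNorm_eq_integral_rpow_norm two_ne_zero ENNReal.ofNat_ne_top,
    ENNReal.toReal_ofReal (by positivity), ENNReal.toReal_ofNat, ← rpow_natCast,
    ← rpow_mul (integral_nonneg fun x => by positivity)]
  simp

lemma KLdiv_eq_zero_of_ae_eq {pX pY : ℝ → ℝ} (h : pX =ᵐ[volume] pY) : KLdiv pX pY = 0 := by
  refine integral_eq_zero_of_ae (h.mono fun x hx => ?_)
  rcases eq_or_ne (pY x) 0 with h0 | h0 <;> simp [hx, h0]


lemma mul_log_div_gauss_le {a : ℝ} (ha : 0 ≤ a) (x : ℝ) :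
    a * log (a / gauss x) ≤ a ^ 2 + x ^ 2 * a / 2 + a := by
  have := mul_le_mul_of_nonneg_left (neg_log_gauss_le x) ha
  nlinarith [mul_log_div_le_mul_sub_log ha (gauss_pos x)]

section Density

variable {p : ℝ → ℝ}

lemma setIntegral_mul_log_div_gauss_le_of_abs_le (hp : ∀ x, 0 ≤ p x)
    (hf : Integrable (fun x => p x * log (p x / gauss x)))
    (hu : Integrable (fun x => p x - gauss x)) (hu2 : Integrable (fun x => (p x - gauss x) ^ 2))
    (T : ℝ) :
    ∫ x in {x | |x| ≤ T}, p x * log (p x / gauss x) ≤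
      (∫ x, |p x - gauss x|) + √(2 * π) * exp (T ^ 2 / 2) * ∫ x, (p x - gauss x) ^ 2 := by
  set K := √(2 * π) * exp (T ^ 2 / 2)
  set I := {x : ℝ | |x| ≤ T}
  have hI : MeasurableSet I := measurableSet_le continuous_abs.measurable measurable_const
  have hpt : ∀ x ∈ I, p x * log (p x / gauss x) ≤
      (p x - gauss x) + K * (p x - gauss x) ^ 2 := by
    intro x (hx : |x| ≤ T)
    have hinv : (gauss x)⁻¹ ≤ K := by
      rw [inv_gauss]
      have := sq_le_sq' (abs_le.1 hx).1 (abs_le.1 hx).2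
      exact mul_le_mul_of_nonneg_left (exp_le_exp.2 (by linarith)) (sqrt_nonneg _)
    refine (mul_log_div_le_sub_add_sq_div (hp x) (gauss_pos x)).trans ?_
    rw [div_eq_mul_inv, mul_comm K]
    gcongr
  calc ∫ x in I, p x * log (p x / gauss x)
      ≤ ∫ x in I, ((p x - gauss x) + K * (p x - gauss x) ^ 2) :=
        setIntegral_mono_on hf.integrableOn (hu.add (hu2.const_mul K)).integrableOn hI hpt
    _ = (∫ x in I, (p x - gauss x)) + K * ∫ x in I, (p x - gauss x) ^ 2 := by
        rw [integral_add hu.integrableOn (hu2.const_mul K).integrableOn, integral_const_mul]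
    _ ≤ (∫ x, |p x - gauss x|) + K * ∫ x, (p x - gauss x) ^ 2 :=
        add_le_add
          ((setIntegral_mono hu.integrableOn hu.abs.integrableOn fun x => le_abs_self _).trans
            (setIntegral_le_integral hu.abs (ae_of_all _ fun x => abs_nonneg _)))
          (mul_le_mul_of_nonneg_left
            (setIntegral_le_integral hu2 (ae_of_all _ fun x => sq_nonneg _)) (by positivity))

lemma setIntegral_mul_log_div_gauss_le_of_lt_abs {s T : ℝ} (hs : 2 < s) (hT : 0 ≤ T)
    (hp : ∀ x, 0 ≤ p x) (hpi : Integrable p) (hp2 : Integrable (fun x => p x ^ 2))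
    (hx2 : Integrable (fun x => x ^ 2 * p x)) (hps : Integrable (fun x => |x| ^ s * p x))
    (hβ : 0 < ∫ x, |x| ^ s * p x) (hf : Integrable (fun x => p x * log (p x / gauss x)))
    (hu : Integrable (fun x => p x - gauss x)) (hu2 : Integrable (fun x => (p x - gauss x) ^ 2)) :
    ∫ x in {x | T < |x|}, p x * log (p x / gauss x) ≤
      4 * exp (-T ^ 2 / 2) + 2 * (∫ x, (p x - gauss x) ^ 2)
        + (∫ x, |x| ^ s * p x) ^ (2 / s) *
          (2 * exp (-T ^ 2 / 2) + ∫ x, |p x - gauss x|) ^ (1 - 2 / s)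
        + (2 * exp (-T ^ 2 / 2) + ∫ x, |p x - gauss x|) := by
  set R := {x : ℝ | T < |x|}
  set a := 2 * exp (-T ^ 2 / 2) + ∫ x, |p x - gauss x|
  have hgauss := setIntegral_gauss_lt_abs_le hT
  have hmass : ∫ x in R, p x ≤ a :=
    calc ∫ x in R, p x ≤ ∫ x in R, (gauss x + |p x - gauss x|) :=
          setIntegral_mono hpi.integrableOn (integrable_gauss.add hu.abs).integrableOn
            fun x => by linarith [le_abs_self (p x - gauss x)]
      _ = (∫ x in R, gauss x) + ∫ x in R, |p x - gauss x| :=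
          integral_add integrable_gauss.integrableOn hu.abs.integrableOn
      _ ≤ a := add_le_add hgauss
          (setIntegral_le_integral hu.abs (ae_of_all _ fun x => abs_nonneg _))
  have hsq : ∫ x in R, p x ^ 2 ≤ 4 * exp (-T ^ 2 / 2) + 2 * ∫ x, (p x - gauss x) ^ 2 :=
    calc ∫ x in R, p x ^ 2 ≤ ∫ x in R, (2 * gauss x + 2 * (p x - gauss x) ^ 2) :=
          setIntegral_mono hp2.integrableOn
            ((integrable_gauss.const_mul 2).add (hu2.const_mul 2)).integrableOn fun x => by
              nlinarith [add_sq_le (a := gauss x) (b := p x - gauss x), gauss_pos x, gauss_le_one x]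
      _ = 2 * (∫ x in R, gauss x) + 2 * ∫ x in R, (p x - gauss x) ^ 2 := by
          rw [integral_add (integrable_gauss.const_mul 2).integrableOn
            (hu2.const_mul 2).integrableOn, integral_const_mul, integral_const_mul]
      _ ≤ 4 * exp (-T ^ 2 / 2) + 2 * ∫ x, (p x - gauss x) ^ 2 := by
          have := setIntegral_le_integral (s := R) hu2 (ae_of_all _ fun x => sq_nonneg _)
          linarith
  have hmom : ∫ x in R, x ^ 2 * p x ≤ 2 * ((∫ x, |x| ^ s * p x) ^ (2 / s) * a ^ (1 - 2 / s)) :=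
    integral_sq_mul_le_of_le hs hp hpi.integrableOn hps.integrableOn (by positivity) hβ hmass
      (setIntegral_le_integral hps (ae_of_all _ fun x => mul_nonneg (by positivity) (hp x)))
  calc ∫ x in R, p x * log (p x / gauss x)
      ≤ ∫ x in R, (p x ^ 2 + x ^ 2 * p x / 2 + p x) :=
        setIntegral_mono hf.integrableOn
          ((hp2.add (hx2.div_const 2)).add hpi).integrableOn fun x => mul_log_div_gauss_le (hp x) x
    _ = (∫ x in R, p x ^ 2) + (∫ x in R, x ^ 2 * p x) / 2 + ∫ x in R, p x := by
        have h : Integrable (fun x => p x ^ 2 + x ^ 2 * p x / 2) := hp2.add (hx2.div_const 2)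
        rw [integral_add h.integrableOn hpi.integrableOn,
          integral_add hp2.integrableOn (hx2.div_const 2).integrableOn, integral_div]
    _ ≤ _ := by linarith

lemma KLdiv_gauss_le_of_integrable {s : ℝ} (hs : 2 < s) (hp : ∀ x, 0 ≤ p x) (hpi : Integrable p)
    (hp2 : Integrable (fun x => p x ^ 2)) (hx2 : Integrable (fun x => x ^ 2 * p x))
    (hps : Integrable (fun x => |x| ^ s * p x)) (hβ : 0 < ∫ x, |x| ^ s * p x)
    (hf : Integrable (fun x => p x * log (p x / gauss x)))
    (hu : Integrable (fun x => p x - gauss x)) (hu2 : Integrable (fun x => (p x - gauss x) ^ 2))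
    {ε₂ : ℝ} (hε₂ : 0 < ε₂) (hε₂1 : ε₂ ≤ 1) (hu2ε : ∫ x, (p x - gauss x) ^ 2 = ε₂ ^ 2) :
    KLdiv p gauss ≤ 11 * ((∫ x, |p x - gauss x|) + ε₂)
      + (∫ x, |x| ^ s * p x) ^ (2 / s) * ((∫ x, |p x - gauss x|) + ε₂) ^ (1 - 2 / s) := by
  -- `φ(T) ≍ ε₂`: the centre then costs `ε₂² / φ(T) ≍ ε₂`, and the Gaussian tail beyond `T` is `ε₂`.
  have hlog : 0 ≤ log (2 / ε₂) := log_nonneg (by rw [le_div_iff₀ hε₂]; linarith)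
  obtain ⟨T, hT0, hT⟩ : ∃ T : ℝ, 0 ≤ T ∧ T ^ 2 / 2 = log (2 / ε₂) :=
    ⟨√(2 * log (2 / ε₂)), sqrt_nonneg _, by rw [sq_sqrt (by positivity)]; ring⟩
  have hexp : exp (T ^ 2 / 2) = 2 / ε₂ := by rw [hT, exp_log (by positivity)]
  have hexp_neg : exp (-T ^ 2 / 2) = ε₂ / 2 := by rw [neg_div, exp_neg, hexp, inv_div]
  have hI : MeasurableSet {x : ℝ | |x| ≤ T} :=
    measurableSet_le continuous_abs.measurable measurable_const
  have hIc : {x : ℝ | |x| ≤ T}ᶜ = {x | T < |x|} := by ext; simp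
  have hcenter := setIntegral_mul_log_div_gauss_le_of_abs_le hp hf hu hu2 T
  have htail := setIntegral_mul_log_div_gauss_le_of_lt_abs hs hT0 hp hpi hp2 hx2 hps
    hβ hf hu hu2
  rw [hexp, hu2ε] at hcenter
  rw [hexp_neg, hu2ε, show 2 * (ε₂ / 2) = ε₂ by ring, add_comm ε₂] at htail
  rw [KLdiv, ← integral_add_compl hI hf, hIc]
  have hsqrt : √(2 * π) * (2 / ε₂) * ε₂ ^ 2 ≤ 6 * ε₂ := by
    rw [show √(2 * π) * (2 / ε₂) * ε₂ ^ 2 = 2 * √(2 * π) * ε₂ by field_simp]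
    nlinarith [sqrt_two_pi_le_three]
  have hε₁ : 0 ≤ ∫ x, |p x - gauss x| := integral_nonneg fun x => abs_nonneg _
  have hε₂sq : ε₂ ^ 2 ≤ ε₂ := by nlinarith
  linarith

lemma integral_abs_rpow_mul_pos {s : ℝ} (hs : 2 ≤ s) (hp : ∀ x, 0 ≤ p x) (hpi : Integrable p)
    (hp1 : ∫ x, p x = 1) (hps : Integrable (fun x => |x| ^ s * p x))
    (hx21 : ∫ x, x ^ 2 * p x = 1) : 0 < ∫ x, |x| ^ s * p x := by
  have hβ : 0 ≤ ∫ x, |x| ^ s * p x := integral_nonneg fun x => mul_nonneg (by positivity) (hp x)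
  refine hβ.lt_of_ne fun h => ?_
  -- if the `s`-th moment vanished, truncating `x²` at `1/2` would bound the second moment by `1/4`
  have := integral_sq_mul_le hs hp hpi hps (T := 1 / 2) (by norm_num)
  rw [hx21, hp1, ← h] at this
  norm_num at this

lemma KLdiv_gauss_le {s : ℝ} (hs : 2 < s) (hpm : Measurable p) (hp : ∀ x, 0 ≤ p x)
    (hp1 : ∫ x, p x = 1) (hx2 : Integrable (fun x => x ^ 2 * p x)) (hx21 : ∫ x, x ^ 2 * p x = 1)
    (hps : Integrable (fun x => |x| ^ s * p x))
    (hL2 : eLpNorm (fun x => p x - gauss x) 2 volume ≤ 1) :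
    KLdiv p gauss ≤
      11 * (nrm (fun x => p x - gauss x) 1 + nrm (fun x => p x - gauss x) 2)
        + (∫ x, |x| ^ s * p x) ^ (2 / s) *
          (nrm (fun x => p x - gauss x) 1 + nrm (fun x => p x - gauss x) 2) ^ (1 - 2 / s) := by
  have hpi : Integrable p := by
    by_contra h
    rw [integral_undef h] at hp1
    exact zero_ne_one hp1
  have hu : Integrable (fun x => p x - gauss x) := hpi.sub integrable_gauss
  have hu2mem : MemLp (fun x => p x - gauss x) 2 :=
    ⟨hu.aestronglyMeasurable, hL2.trans_lt ENNReal.one_lt_top⟩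
  have hu2 := hu2mem.integrable_sq
  have hp2 : Integrable (fun x => p x ^ 2) := by
    refine ((integrable_gauss.const_mul 2).add (hu2.const_mul 2)).mono'
      (hpm.pow_const 2).aestronglyMeasurable (ae_of_all _ fun x => ?_)
    rw [norm_of_nonneg (sq_nonneg _), Pi.add_apply]
    nlinarith [add_sq_le (a := gauss x) (b := p x - gauss x), gauss_pos x, gauss_le_one x]
  have hβ := integral_abs_rpow_mul_pos hs.le hp hpi hp1 hps hx21
  rw [nrm_one_eq_integral_abs hu.aestronglyMeasurable]
  have hε₂1 : nrm (fun x => p x - gauss x) 2 ≤ 1 := by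
    simpa [nrm] using ENNReal.toReal_mono ENNReal.one_ne_top hL2
  have hRHS : 0 ≤ 11 * ((∫ x, |p x - gauss x|) + nrm (fun x => p x - gauss x) 2)
      + (∫ x, |x| ^ s * p x) ^ (2 / s) *
        ((∫ x, |p x - gauss x|) + nrm (fun x => p x - gauss x) 2) ^ (1 - 2 / s) := by
    have : 0 ≤ nrm (fun x => p x - gauss x) 2 := ENNReal.toReal_nonneg
    have : 0 ≤ ∫ x, |p x - gauss x| := integral_nonneg fun x => abs_nonneg _
    positivity
  by_cases hf : Integrable (fun x => p x * log (p x / gauss x))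
  swap
  · rwa [KLdiv, integral_undef hf]
  rcases (ENNReal.toReal_nonneg : 0 ≤ nrm (fun x => p x - gauss x) 2).eq_or_lt with h0 | hpos
  · have hae : (fun x => p x - gauss x) =ᵐ[volume] 0 := by
      rw [← eLpNorm_eq_zero_iff hu.aestronglyMeasurable two_ne_zero]
      exact (ENNReal.toReal_eq_zero_iff _).1 h0.symm |>.resolve_right hu2mem.eLpNorm_ne_top
    rw [KLdiv_eq_zero_of_ae_eq (hae.mono fun x hx => sub_eq_zero.1 hx)]
    exact hRHS
  · exact KLdiv_gauss_le_of_integrable hs hp hpi hp2 hx2 hps hβ hf hu hu2 hpos hε₂1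
      (nrm_two_sq_eq_integral_sq hu2mem).symm

end Density

/-- **Corollary 2.3.** For every `s > 2` there are constants `C₁, C₂ > 0` such that for any
random variable `X` with density `p`, `E X = 0`, `Var X = 1`, `E|X|^s < ∞` and `‖p−φ‖₂ ≤ 1`,
`D(X) ≤ (C₁ + ‖p−φ‖_∞)(‖p−φ‖₁ + ‖p−φ‖₂) + C₂ (E|X|^s)^{2/s} (‖p−φ‖₁ + ‖p−φ‖₂)^{1−2/s}`. -/
theorem D_upper_bound_L1_L2_with_sup :
    ∀ s : ℝ, 2 < s →
      ∃ C₁ C₂ : ℝ, 0 < C₁ ∧ 0 < C₂ ∧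
        ∀ p : ℝ → ℝ, Measurable p → (∀ x, 0 ≤ p x) → (∫ x, p x) = 1 →
          Integrable (fun x => x * p x) → (∫ x, x * p x) = 0 →
          Integrable (fun x => x ^ 2 * p x) → (∫ x, x ^ 2 * p x) = 1 →
          Integrable (fun x => |x| ^ s * p x) →
          eLpNorm (fun x => p x - gauss x) 2 volume ≤ 1 →
            KLdiv p gauss ≤
              (C₁ + nrm (fun x => p x - gauss x) ⊤) *
                  (nrm (fun x => p x - gauss x) 1 + nrm (fun x => p x - gauss x) 2)
              + C₂ * (∫ x, |x| ^ s * p x) ^ (2 / s) *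
                  (nrm (fun x => p x - gauss x) 1 + nrm (fun x => p x - gauss x) 2) ^ (1 - 2 / s) := by
  intro s hs
  refine ⟨11, 1, by norm_num, one_pos, fun p hpm hp hp1 _ _ hx2 hx21 hps hL2 => ?_⟩
  have hsup : 0 ≤ nrm (fun x => p x - gauss x) ⊤ := ENNReal.toReal_nonneg
  have hε : 0 ≤ nrm (fun x => p x - gauss x) 1 + nrm (fun x => p x - gauss x) 2 :=
    add_nonneg ENNReal.toReal_nonneg ENNReal.toReal_nonneg
  have := KLdiv_gauss_le hs hpm hp hp1 hx2 hx21 hps hL2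
  linarith [mul_nonneg hsup hε]
end
end
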